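/- arXiv:2206.10431 — 3 statements merged into one kernel-verified Lean document; each statement's English description precedes it below -/
import Mathlib

section
/- Let H be an n×n real symmetric matrix with bosonic form H̃ = H₋ − H₊. For every β ≥ 0, Tr[exp(−βH̃)] ≥ Tr[exp(−βH)]; i.e., the non-stoquasticity indicator S(H) is nonnegative. -/
/-! Shift both matrices by `c • 1` with `c ≥ β Hᵢᵢ` for all `i`. Off the diagonal `H̃` carries
`-|Hᵢⱼ|`, so `c • 1 - β H̃` is entrywise nonnegative and dominates `|c • 1 - β H|` entrywise.
Entrywise domination passes to all powers and, as the exponential series has nonnegative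
coefficients, to `Tr exp`; the shift contributes the same factor `eᶜ` to both traces.
For the indicator, `Tr e^{-βH} ≥ 0` since `e^{-βH} = e^{-βH/2} (e^{-βH/2})ᵀ` for symmetric `H`. -/

open Matrix Filter

/-- The positive off-diagonal part `H₊` of a real matrix:
`(H₊)ᵢⱼ = Hᵢⱼ` if `i ≠ j` and `Hᵢⱼ > 0`, and `0` otherwise. -/
noncomputable def Hplus {n : ℕ} (H : Matrix (Fin n) (Fin n) ℝ) : Matrix (Fin n) (Fin n) ℝ :=
  Matrix.of fun i j => if i ≠ j ∧ 0 < H i j then H i j else 0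

/-- The remaining part `H₋ := H - H₊`. -/
noncomputable def Hminus {n : ℕ} (H : Matrix (Fin n) (Fin n) ℝ) : Matrix (Fin n) (Fin n) ℝ :=
  H - Hplus H

/-- The bosonic form `H̃ := H₋ - H₊` of `H`. -/
noncomputable def bosonic {n : ℕ} (H : Matrix (Fin n) (Fin n) ℝ) : Matrix (Fin n) (Fin n) ℝ :=
  Hminus H - Hplus H

/-- The entrywise L1 norm `‖M‖_{L1} = ∑ᵢⱼ |Mᵢⱼ|`. -/
noncomputable def L1 {n : ℕ} (M : Matrix (Fin n) (Fin n) ℝ) : ℝ :=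
  ∑ i, ∑ j, |M i j|

/-- `α = maxᵢ Hᵢᵢ`, the largest diagonal entry. -/
noncomputable def alphaMax {n : ℕ} [NeZero n] (H : Matrix (Fin n) (Fin n) ℝ) : ℝ :=
  ⨆ i, H i i

open NormedSpace

namespace Matrix

variable {ι : Type*} [Fintype ι] [DecidableEq ι]

theorem abs_pow_apply_le {R : Type*} [CommRing R] [LinearOrder R] [IsStrictOrderedRing R]
    {A B : Matrix ι ι R} (hAB : ∀ i j, |A i j| ≤ B i j) (k : ℕ) (i j : ι) :
    |(A ^ k) i j| ≤ (B ^ k) i j := by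
  induction k generalizing j with
  | zero => by_cases hij : i = j <;> simp [hij]
  | succ k ih =>
    rw [pow_succ, pow_succ, mul_apply, mul_apply]
    refine (Finset.abs_sum_le_sum_abs _ _).trans (Finset.sum_le_sum fun l _ => ?_)
    rw [abs_mul]
    exact mul_le_mul (ih l) (hAB l j) (abs_nonneg _) ((abs_nonneg _).trans (ih l))

section Real

attribute [local instance] Matrix.linftyOpNormedRing Matrix.linftyOpNormedAlgebra

theorem hasSum_trace_exp (M : Matrix ι ι ℝ) :
    HasSum (fun k : ℕ => (k.factorial : ℝ)⁻¹ * (M ^ k).trace) (exp M).trace := by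
  have h :=
    (exp_series_hasSum_exp' (𝕂 := ℝ) M).mapL (traceLinearMap ι ℝ ℝ).toContinuousLinearMap
  simp only [LinearMap.coe_toContinuousLinearMap', traceLinearMap_apply, trace_smul,
    smul_eq_mul] at h
  exact h

theorem trace_exp_le_of_abs_le {A B : Matrix ι ι ℝ} (hAB : ∀ i j, |A i j| ≤ B i j) :
    (exp A).trace ≤ (exp B).trace :=
  hasSum_le (fun k => mul_le_mul_of_nonneg_left
      (Finset.sum_le_sum fun i _ => (le_abs_self _).trans (abs_pow_apply_le hAB k i i))
      (by positivity))
    (hasSum_trace_exp A) (hasSum_trace_exp B)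

theorem exp_smul_one (c : ℝ) : exp (c • (1 : Matrix ι ι ℝ)) = Real.exp c • 1 := by
  rw [← Algebra.algebraMap_eq_smul_one, ← Algebra.algebraMap_eq_smul_one, Real.exp_eq_exp_ℝ]
  exact (algebraMap_exp_comm c).symm

theorem trace_exp_smul_one_add (c : ℝ) (M : Matrix ι ι ℝ) :
    (exp (c • 1 + M)).trace = Real.exp c * (exp M).trace := by
  rw [exp_add_of_commute _ _ ((Commute.one_left M).smul_left c), exp_smul_one, smul_mul,
    one_mul, trace_smul, smul_eq_mul]

end Real

theorem IsSymm.trace_exp_nonneg {A : Matrix ι ι ℝ} (hA : A.IsSymm) :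
    0 ≤ (NormedSpace.exp A).trace := by
  set N := NormedSpace.exp ((2 : ℝ)⁻¹ • A)
  have hN : Nᴴ = N := by
    rw [conjTranspose_eq_transpose_of_trivial, ← exp_transpose, (hA.smul _).eq]
  have hsplit : NormedSpace.exp A = N * Nᴴ := by
    rw [hN, ← exp_add_of_commute _ _ (Commute.refl _), ← add_smul]
    norm_num
  exact hsplit ▸ (posSemidef_self_mul_conjTranspose N).trace_nonneg

end Matrix

section Bosonic

variable {n : ℕ}

theorem bosonic_apply_self (H : Matrix (Fin n) (Fin n) ℝ) (i : Fin n) :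
    bosonic H i i = H i i := by
  simp [bosonic, Hminus, Hplus]

theorem bosonic_apply_of_ne (H : Matrix (Fin n) (Fin n) ℝ) {i j : Fin n} (hij : i ≠ j) :
    bosonic H i j = -|H i j| := by
  by_cases hpos : 0 < H i j
  · simp [bosonic, Hminus, Hplus, hij, hpos, abs_of_pos hpos]
  · simp [bosonic, Hminus, Hplus, hij, hpos, abs_of_nonpos (not_lt.1 hpos)]

theorem abs_smul_one_add_neg_smul_apply_le_bosonic (H : Matrix (Fin n) (Fin n) ℝ) {β c : ℝ}
    (hβ : 0 ≤ β) (hc : ∀ i, β * H i i ≤ c) (i j : Fin n) :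
    |(c • 1 + -β • H) i j| ≤ (c • 1 + -β • bosonic H) i j := by
  rcases eq_or_ne i j with rfl | hij
  · simp only [Matrix.add_apply, Matrix.smul_apply, one_apply_eq, bosonic_apply_self,
      smul_eq_mul, mul_one, neg_mul]
    exact (abs_of_nonneg (by linarith [hc i])).le
  · simp [one_apply_ne hij, bosonic_apply_of_ne H hij, abs_mul, abs_of_nonneg hβ]

end Bosonic

/-- For a real symmetric matrix `H` with bosonic form `H̃ = H₋ - H₊` and any `β ≥ 0`,
`Tr e^{-βH̃} ≥ Tr e^{-βH}`; i.e. the non-stoquasticity indicator `S(H)` is nonnegative. -/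
theorem nsi_nonneg {n : ℕ} (H : Matrix (Fin n) (Fin n) ℝ) (hH : H.IsSymm)
    (β : ℝ) (hβ : 0 ≤ β) :
    (NormedSpace.exp (-β • H)).trace ≤ (NormedSpace.exp (-β • bosonic H)).trace ∧
    0 ≤ ((NormedSpace.exp (-β • bosonic H)).trace - (NormedSpace.exp (-β • H)).trace) /
        (NormedSpace.exp (-β • H)).trace := by
  obtain ⟨c, hc⟩ := (Set.finite_range fun i => β * H i i).bddAbove
  have hshift := Matrix.trace_exp_le_of_abs_le
    (abs_smul_one_add_neg_smul_apply_le_bosonic H hβ fun i => hc ⟨i, rfl⟩)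
  rw [Matrix.trace_exp_smul_one_add, Matrix.trace_exp_smul_one_add] at hshift
  have hle := le_of_mul_le_mul_left hshift (Real.exp_pos c)
  exact ⟨hle, div_nonneg (sub_nonneg.2 hle) (hH.smul (-β)).trace_exp_nonneg⟩
end

section
/- (Peierls inequality) Let M be an n×n real symmetric matrix. Then Tr[exp(M)] ≥ Σ_{i=1}^{n} exp(M_{ii}); i.e., the trace of the matrix exponential is at least the sum of the exponentials of the diagonal entries. In particular, for a real symmetric H and β > 0, Tr[exp(−βH)] ≥ exp(−β α) > 0 where α = max_i H_{ii}. -/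
/-! Diagonalize `A = U D Uᴴ` with `U` unitary. The diagonal of `A` is then `P λ`, where `λ` are
the eigenvalues and `P i k = ‖U i k‖²` is doubly stochastic, while `Tr exp A = ∑ₖ exp λₖ`.
Jensen's inequality for `exp`, applied row by row to `P` and summed using the column sums of `P`,
gives `∑ᵢ exp (P λ)ᵢ ≤ ∑ₖ exp λₖ`. The bound by `exp (-β α)` keeps a single diagonal term. -/

open Matrix Filter

open Finset in
theorem ConvexOn.sum_comp_mulVec_le_of_mem_doublyStochastic {𝕜 β ι : Type*} [Field 𝕜]
    [LinearOrder 𝕜] [IsStrictOrderedRing 𝕜] [AddCommGroup β] [PartialOrder β]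
    [IsOrderedAddMonoid β] [Module 𝕜 β] [IsStrictOrderedModule 𝕜 β] [Fintype ι] [DecidableEq ι]
    {s : Set 𝕜} {f : 𝕜 → β} (hf : ConvexOn 𝕜 s f) {P : Matrix ι ι 𝕜}
    (hP : P ∈ doublyStochastic 𝕜 ι) {x : ι → 𝕜} (hx : ∀ i, x i ∈ s) :
    ∑ i, f ((P *ᵥ x) i) ≤ ∑ i, f (x i) :=
  calc ∑ i, f ((P *ᵥ x) i) = ∑ i, f (∑ j, P i j • x j) := by simp [mulVec, dotProduct]
    _ ≤ ∑ i, ∑ j, P i j • f (x j) := sum_le_sum fun i _ =>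
        hf.map_sum_le (fun _ _ => nonneg_of_mem_doublyStochastic hP)
          (sum_row_of_mem_doublyStochastic hP i) (fun j _ => hx j)
    _ = ∑ j, (∑ i, P i j) • f (x j) := by rw [sum_comm]; simp only [sum_smul]
    _ = ∑ j, f (x j) := by simp only [sum_col_of_mem_doublyStochastic hP, one_smul]

namespace Matrix

variable {ι 𝕜 : Type*} [Fintype ι] [DecidableEq ι] [RCLike 𝕜]

theorem of_norm_sq_mem_doublyStochastic {U : Matrix ι ι 𝕜} (hU : U ∈ unitaryGroup ι 𝕜) :
    (of fun i j => ‖U i j‖ ^ 2) ∈ doublyStochastic ℝ ι := by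
  have hnorm : ∀ z : 𝕜, ((‖z‖ ^ 2 : ℝ) : 𝕜) = z * star z := fun z => by
    push_cast; exact (RCLike.mul_conj z).symm
  refine mem_doublyStochastic_iff_sum.2 ⟨fun _ _ => sq_nonneg _, fun i => ?_, fun j => ?_⟩
  · have := congr_fun₂ (mem_unitaryGroup_iff.1 hU) i i
    rw [mul_apply, one_apply_eq] at this
    exact_mod_cast (by simpa [hnorm] using this : ((∑ j, ‖U i j‖ ^ 2 : ℝ) : 𝕜) = 1)
  · have := congr_fun₂ (mem_unitaryGroup_iff'.1 hU) j j
    rw [mul_apply, one_apply_eq] at this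
    exact_mod_cast (by simpa [hnorm, mul_comm] using this : ((∑ i, ‖U i j‖ ^ 2 : ℝ) : 𝕜) = 1)

namespace IsHermitian

variable {A : Matrix ι ι 𝕜} (hA : A.IsHermitian)
include hA

theorem re_diag_eq_mulVec_eigenvalues (i : ι) :
    RCLike.re (A i i) =
      ((of fun i j => ‖(hA.eigenvectorUnitary : Matrix ι ι 𝕜) i j‖ ^ 2) *ᵥ hA.eigenvalues) i := by
  conv_lhs => rw [hA.spectral_theorem, Unitary.conjStarAlgAut_apply, mul_apply]
  simp only [mul_diagonal, star_apply, RCLike.star_def, Function.comp_apply, map_sum, mulVec,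
    dotProduct, of_apply]
  refine Finset.sum_congr rfl fun k _ => ?_
  rw [mul_right_comm, RCLike.mul_conj, ← RCLike.ofReal_pow, ← RCLike.ofReal_mul, RCLike.ofReal_re,
    mul_comm]

theorem trace_exp : (NormedSpace.exp A).trace = ∑ i, (Real.exp (hA.eigenvalues i) : 𝕜) := by
  have hinv : (hA.eigenvectorUnitary : Matrix ι ι 𝕜)⁻¹ =
      star (hA.eigenvectorUnitary : Matrix ι ι 𝕜) :=
    inv_eq_left_inv (Unitary.coe_star_mul_self _)
  conv_lhs => rw [hA.spectral_theorem, Unitary.conjStarAlgAut_apply, ← hinv,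
    exp_conj _ _ Unitary.isUnit_coe, hinv, trace_mul_cycle, Unitary.coe_star_mul_self, one_mul,
    exp_diagonal, trace_diagonal]
  refine Finset.sum_congr rfl fun i _ => ?_
  rw [Pi.coe_exp, Function.comp_apply, ← RCLike.algebraMap_eq_ofReal,
    ← NormedSpace.algebraMap_exp_comm, Real.exp_eq_exp_ℝ]

theorem sum_exp_re_diag_le_re_trace_exp :
    ∑ i, Real.exp (RCLike.re (A i i)) ≤ RCLike.re (NormedSpace.exp A).trace :=
  calc ∑ i, Real.exp (RCLike.re (A i i))
      = ∑ i, Real.exp (((of fun i j => ‖(hA.eigenvectorUnitary : Matrix ι ι 𝕜) i j‖ ^ 2) *ᵥ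
          hA.eigenvalues) i) := by simp only [hA.re_diag_eq_mulVec_eigenvalues]
    _ ≤ ∑ i, Real.exp (hA.eigenvalues i) :=
      convexOn_exp.sum_comp_mulVec_le_of_mem_doublyStochastic
        (of_norm_sq_mem_doublyStochastic hA.eigenvectorUnitary.2) fun _ => Set.mem_univ _
    _ = RCLike.re (NormedSpace.exp A).trace := by simp [hA.trace_exp]

end IsHermitian

end Matrix

theorem le_alphaMax {n : ℕ} [NeZero n] (H : Matrix (Fin n) (Fin n) ℝ) (i : Fin n) :
    H i i ≤ alphaMax H :=
  le_ciSup (f := fun i => H i i) (Set.finite_range _).bddAbove i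

/-- **Peierls inequality.** For a real symmetric matrix `M`,
`Tr[exp M] ≥ ∑ᵢ exp(Mᵢᵢ)`. In particular, for a real symmetric `H` and `β > 0`,
`Tr[exp(-βH)] ≥ exp(-βα) > 0` where `α = maxᵢ Hᵢᵢ`. -/
theorem peierls_inequality {n : ℕ} [NeZero n] (M : Matrix (Fin n) (Fin n) ℝ) (hM : M.IsSymm) :
    (∑ i, Real.exp (M i i)) ≤ (NormedSpace.exp M).trace ∧
    ∀ (H : Matrix (Fin n) (Fin n) ℝ), H.IsSymm → ∀ β : ℝ, 0 < β →
      Real.exp (-β * alphaMax H) ≤ (NormedSpace.exp (-β • H)).trace ∧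
      0 < (NormedSpace.exp (-β • H)).trace := by
  have peierls (A : Matrix (Fin n) (Fin n) ℝ) (hA : A.IsSymm) :
      ∑ i, Real.exp (A i i) ≤ (NormedSpace.exp A).trace :=
    (isHermitian_iff_isSymm.2 hA).sum_exp_re_diag_le_re_trace_exp
  refine ⟨peierls M hM, fun H hH β hβ => ?_⟩
  have hα : Real.exp (-β * alphaMax H) ≤ ∑ i, Real.exp ((-β • H) i i) :=
    calc Real.exp (-β * alphaMax H) ≤ Real.exp ((-β • H) (0 : Fin n) 0) := by
          rw [Matrix.smul_apply, smul_eq_mul, Real.exp_le_exp, neg_mul, neg_mul, neg_le_neg_iff]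
          exact mul_le_mul_of_nonneg_left (le_alphaMax H 0) hβ.le
      _ ≤ ∑ i, Real.exp ((-β • H) i i) :=
          Finset.single_le_sum (f := fun i => Real.exp ((-β • H) i i))
            (fun _ _ => (Real.exp_pos _).le) (Finset.mem_univ 0)
  have hbound := hα.trans (peierls _ (hH.smul _))
  exact ⟨hbound, (Real.exp_pos _).trans_le hbound⟩
end

section
/- Let A and B be arbitrary n×n real matrices. Then |Tr[exp(A + B)] − Tr[exp(A − B)]| ≤ 2·exp(‖A‖_{L1})·sinh(‖B‖_{L1}), where ‖M‖_{L1} := Σ_{i,j} |M_{ij}|. -/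
/-! Put `u = x + y`, `v = x - y` in a real Banach algebra. The identities
`u^(k+1) ∓ v^(k+1) = x (u^k ∓ v^k) + y (u^k ± v^k)` give, by a joint induction on the odd and even
parts, `‖u^k - v^k‖ ≤ (‖x‖ + ‖y‖)^k - (‖x‖ - ‖y‖)^k`; summing the exponential series,
`‖e^u - e^v‖ ≤ e^(‖x‖+‖y‖) - e^(‖x‖-‖y‖) = 2 e^‖x‖ sinh ‖y‖`. The entrywise `ℓ¹` norm is
submultiplicative, so it makes square matrices a Banach algebra, and it dominates the trace. -/

open Matrix

section Ring

variable {R : Type*} [Ring R]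

theorem add_pow_succ_sub_sub_pow_succ (x y : R) (k : ℕ) :
    (x + y) ^ (k + 1) - (x - y) ^ (k + 1) =
      x * ((x + y) ^ k - (x - y) ^ k) + y * ((x + y) ^ k + (x - y) ^ k) := by
  rw [pow_succ', pow_succ']
  noncomm_ring

theorem add_pow_succ_add_sub_pow_succ (x y : R) (k : ℕ) :
    (x + y) ^ (k + 1) + (x - y) ^ (k + 1) =
      x * ((x + y) ^ k + (x - y) ^ k) + y * ((x + y) ^ k - (x - y) ^ k) := by
  rw [pow_succ', pow_succ']
  noncomm_ring

end Ring

section SeminormedRing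

variable {R : Type*} [SeminormedRing R]

-- The exponent is `k + 1` because `‖1 + 1‖ ≤ 2` fails when `‖1‖ > 1` (as for the `ℓ¹` norm).
theorem norm_add_pow_succ_sub_and_add_sub_pow_succ_le (x y : R) (k : ℕ) :
    ‖(x + y) ^ (k + 1) - (x - y) ^ (k + 1)‖ ≤ (‖x‖ + ‖y‖) ^ (k + 1) - (‖x‖ - ‖y‖) ^ (k + 1) ∧
      ‖(x + y) ^ (k + 1) + (x - y) ^ (k + 1)‖ ≤ (‖x‖ + ‖y‖) ^ (k + 1) + (‖x‖ - ‖y‖) ^ (k + 1) := by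
  induction k with
  | zero =>
    simp only [zero_add, pow_one, add_sub_sub_cancel, add_add_sub_cancel]
    constructor <;> refine (norm_add_le _ _).trans_eq ?_ <;> ring
  | succ k ih =>
    obtain ⟨hsub, hadd⟩ := ih
    constructor
    · rw [add_pow_succ_sub_sub_pow_succ x y (k + 1)]
      refine (norm_add_le_of_le (norm_mul_le_of_le le_rfl hsub)
        (norm_mul_le_of_le le_rfl hadd)).trans_eq ?_
      ring
    · rw [add_pow_succ_add_sub_pow_succ x y (k + 1)]
      refine (norm_add_le_of_le (norm_mul_le_of_le le_rfl hadd)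
        (norm_mul_le_of_le le_rfl hsub)).trans_eq ?_
      ring

theorem norm_add_pow_sub_sub_pow_le (x y : R) (k : ℕ) :
    ‖(x + y) ^ k - (x - y) ^ k‖ ≤ (‖x‖ + ‖y‖) ^ k - (‖x‖ - ‖y‖) ^ k := by
  cases k with
  | zero => simp
  | succ k => exact (norm_add_pow_succ_sub_and_add_sub_pow_succ_le x y k).1

end SeminormedRing

theorem Real.exp_add_sub_exp_sub (a b : ℝ) :
    Real.exp (a + b) - Real.exp (a - b) = 2 * Real.exp a * Real.sinh b := by
  rw [Real.sinh_eq, Real.exp_add, Real.exp_sub, Real.exp_neg, div_eq_mul_inv]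
  ring

theorem norm_exp_add_sub_exp_sub_le {𝔸 : Type*} [NormedRing 𝔸] [NormedAlgebra ℝ 𝔸]
    [CompleteSpace 𝔸] (x y : 𝔸) :
    ‖NormedSpace.exp (x + y) - NormedSpace.exp (x - y)‖ ≤ 2 * Real.exp ‖x‖ * Real.sinh ‖y‖ := by
  have hexp (z : 𝔸) := NormedSpace.exp_series_hasSum_exp' (𝕂 := ℝ) z
  have hreal (t : ℝ) : HasSum (fun k ↦ (k.factorial : ℝ)⁻¹ * t ^ k) (Real.exp t) := by
    simpa [Real.exp_eq_exp_ℝ] using NormedSpace.exp_series_hasSum_exp' (𝕂 := ℝ) t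
  rw [← Real.exp_add_sub_exp_sub]
  refine ((hexp _).sub (hexp _)).norm_le_of_bounded ((hreal _).sub (hreal _)) fun k ↦ ?_
  rw [← smul_sub, ← mul_sub, norm_smul, Real.norm_of_nonneg (by positivity)]
  exact mul_le_mul_of_nonneg_left (norm_add_pow_sub_sub_pow_le x y k) (by positivity)

namespace Matrix

variable {l m n α : Type*} [Fintype l] [Fintype m] [Fintype n]

-- Built from `PiLp.normedAddCommGroupToPi` so that its uniformity is the product one, which keeps
-- `NormedSpace.exp` the usual matrix exponential.
noncomputable abbrev l1NormedAddCommGroup [NormedAddCommGroup α] :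
    NormedAddCommGroup (Matrix m n α) :=
  @PiLp.normedAddCommGroupToPi 1 _ _ _ _ (fun _ ↦ PiLp.normedAddCommGroupToPi 1 _)

attribute [local instance] l1NormedAddCommGroup

theorem l1_norm_def [NormedAddCommGroup α] (A : Matrix m n α) : ‖A‖ = ∑ i, ∑ j, ‖A i j‖ := by
  change ‖WithLp.toLp 1 fun i ↦ WithLp.toLp 1 fun j ↦ A i j‖ = _
  simp only [PiLp.norm_eq_of_L1]

theorem l1_norm_row_le [NormedAddCommGroup α] (A : Matrix m n α) (i : m) :
    ∑ j, ‖A i j‖ ≤ ‖A‖ :=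
  (l1_norm_def A).symm ▸
    Finset.single_le_sum (f := fun i ↦ ∑ j, ‖A i j‖) (fun _ _ ↦ by positivity) (Finset.mem_univ i)

theorem l1_norm_mul_le [NormedRing α] (A : Matrix l m α) (B : Matrix m n α) :
    ‖A * B‖ ≤ ‖A‖ * ‖B‖ :=
  calc ‖A * B‖ ≤ ∑ i, ∑ j, ∑ k, ‖A i k‖ * ‖B k j‖ := by
        rw [l1_norm_def]
        gcongr with i _ j _
        exact norm_sum_le_of_le _ fun k _ ↦ norm_mul_le _ _
    _ = ∑ i, ∑ k, ‖A i k‖ * ∑ j, ‖B k j‖ := by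
        simp_rw [Finset.mul_sum]
        exact Finset.sum_congr rfl fun i _ ↦ Finset.sum_comm
    _ ≤ ∑ i, ∑ k, ‖A i k‖ * ‖B‖ := by
        gcongr with i _ k _
        exact l1_norm_row_le B k
    _ = ‖A‖ * ‖B‖ := by simp_rw [← Finset.sum_mul, ← l1_norm_def]

theorem norm_trace_le_l1_norm [NormedAddCommGroup α] (A : Matrix m m α) : ‖A.trace‖ ≤ ‖A‖ := by
  rw [l1_norm_def]
  exact (norm_sum_le _ _).trans (Finset.sum_le_sum fun i _ ↦
    Finset.single_le_sum (f := fun j ↦ ‖A i j‖) (fun j _ ↦ norm_nonneg _) (Finset.mem_univ i))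

noncomputable abbrev l1NormedSpace {R : Type*} [NormedField R] [NormedAddCommGroup α]
    [NormedSpace R α] : NormedSpace R (Matrix m n α) :=
  { Matrix.module with
    norm_smul_le c A := by
      simp only [l1_norm_def, smul_apply, norm_smul, Finset.mul_sum, le_refl] }

noncomputable abbrev l1NormedRing [NormedRing α] [DecidableEq m] : NormedRing (Matrix m m α) :=
  fast_instance% { l1NormedAddCommGroup, Matrix.instRing with norm_mul_le := l1_norm_mul_le }

attribute [local instance] l1NormedRing

noncomputable abbrev l1NormedAlgebra {R : Type*} [NormedField R] [NormedRing α]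
    [NormedAlgebra R α] [DecidableEq m] : NormedAlgebra R (Matrix m m α) :=
  { l1NormedSpace, Matrix.instAlgebra with }

end Matrix

/-- For arbitrary real `n×n` matrices `A`, `B`,
`|Tr[exp(A+B)] - Tr[exp(A-B)]| ≤ 2 exp(‖A‖_{L1}) sinh(‖B‖_{L1})`. -/
theorem abs_trace_exp_sub_trace_exp_le {n : ℕ} (A B : Matrix (Fin n) (Fin n) ℝ) :
    |(NormedSpace.exp (A + B)).trace - (NormedSpace.exp (A - B)).trace| ≤
      2 * Real.exp (L1 A) * Real.sinh (L1 B) := by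
  let : NormedRing (Matrix (Fin n) (Fin n) ℝ) := l1NormedRing
  let : NormedAlgebra ℝ (Matrix (Fin n) (Fin n) ℝ) := l1NormedAlgebra
  have hL1 (M : Matrix (Fin n) (Fin n) ℝ) : L1 M = ‖M‖ := by
    simp only [L1, l1_norm_def, Real.norm_eq_abs]
  rw [hL1, hL1, ← trace_sub, ← Real.norm_eq_abs]
  exact (norm_trace_le_l1_norm _).trans (norm_exp_add_sub_exp_sub_le A B)
end
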